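/- Fix β > 0 and R > 0. There exists a constant L = L(β,R,d) > 0 such that for all x, x' ∈ B_R and all probability measures μ, ν supported in B_R, the Gaussian-attention drift satisfies |X_β[μ](x) − X_β[ν](x')| ≤ L(|x − x'| + W₁(μ, ν)). -/

import Mathlib

open MeasureTheory Metric Real

noncomputable section

variable {d : ℕ}

def W1 (μ ν : Measure (EuclideanSpace ℝ (Fin d))) : ℝ :=
  sSup {c | ∃ φ : EuclideanSpace ℝ (Fin d) → ℝ,
    LipschitzWith 1 φ ∧ φ 0 = 0 ∧ c = (∫ x, φ x ∂μ) - ∫ x, φ x ∂ν}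

def Gkernel (d : ℕ) (β : ℝ) (z : EuclideanSpace ℝ (Fin d)) : ℝ :=
  (β / (2 * π)) ^ ((d : ℝ) / 2) * Real.exp (-β * ‖z‖ ^ 2 / 2)

def Gconv (d : ℕ) (β : ℝ) (μ : Measure (EuclideanSpace ℝ (Fin d)))
    (x : EuclideanSpace ℝ (Fin d)) : ℝ :=
  ∫ y, Gkernel d β (x - y) ∂μ

def Gbarycenter (d : ℕ) (β : ℝ) (μ : Measure (EuclideanSpace ℝ (Fin d)))
    (x : EuclideanSpace ℝ (Fin d)) : EuclideanSpace ℝ (Fin d) :=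
  (Gconv d β μ x)⁻¹ • ∫ y, Gkernel d β (x - y) • y ∂μ

def Gdrift (d : ℕ) (β : ℝ) (μ : Measure (EuclideanSpace ℝ (Fin d)))
    (x : EuclideanSpace ℝ (Fin d)) : EuclideanSpace ℝ (Fin d) :=
  Gbarycenter d β μ x - x

open scoped NNReal

/-! On `B_R` the denominator `D_μ(x)` is at least the minimum of the kernel over `B_{2R}` and
`‖A_μ(x)‖ ≤ R ‖G_β‖_∞`, so an elementary quotient estimate reduces the claim to Lipschitz bounds
on `A` and `D` jointly in the point and the measure. Both are integrals of `f(x, ·)` where `f` is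
Lipschitz in `x` for `y ∈ B_R` and Lipschitz in `y` on `B_R`. The variation in the measure is
controlled by the supremum defining `W₁`, after extending the integrand from `B_R` to a globally
Lipschitz function (McShane) and, for the vector-valued `A`, testing against a norming
functional. -/

lemma IsCompact.integrable_of_continuousOn {X F : Type*} [TopologicalSpace X] [T2Space X]
    [MeasurableSpace X] [OpensMeasurableSpace X] [NormedAddCommGroup F] {μ : Measure X}
    [IsFiniteMeasureOnCompacts μ] {K : Set X} {f : X → F} (hK : IsCompact K) (hμ : μ Kᶜ = 0)
    (hf : ContinuousOn f K) : Integrable f μ := by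
  rw [← Measure.restrict_eq_self_of_ae_mem (mem_ae_iff.mpr hμ)]
  exact hf.integrableOn_compact hK

section Wasserstein

variable {R : ℝ} {μ ν : Measure (EuclideanSpace ℝ (Fin d))}
  [IsProbabilityMeasure μ] [IsProbabilityMeasure ν]

lemma abs_integral_le_of_lipschitzWith_one (hμ : μ (closedBall 0 R)ᶜ = 0)
    {φ : EuclideanSpace ℝ (Fin d) → ℝ} (hφ : LipschitzWith 1 φ) (hφ0 : φ 0 = 0) :
    |∫ y, φ y ∂μ| ≤ R := by
  have hbound : ∀ᵐ y ∂μ, ‖φ y‖ ≤ R := by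
    filter_upwards [mem_ae_iff.mpr hμ] with y hy
    have hφy := hφ.norm_sub_le y 0
    rw [hφ0, sub_zero, sub_zero, NNReal.coe_one, one_mul] at hφy
    exact hφy.trans (mem_closedBall_zero_iff.mp hy)
  simpa using norm_integral_le_of_norm_le_const hbound

lemma bddAbove_W1_set (hμ : μ (closedBall 0 R)ᶜ = 0) (hν : ν (closedBall 0 R)ᶜ = 0) :
    BddAbove {c | ∃ φ : EuclideanSpace ℝ (Fin d) → ℝ,
      LipschitzWith 1 φ ∧ φ 0 = 0 ∧ c = (∫ x, φ x ∂μ) - ∫ x, φ x ∂ν} := by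
  refine ⟨2 * R, ?_⟩
  rintro _ ⟨φ, hφ, hφ0, rfl⟩
  have hμφ := abs_le.mp (abs_integral_le_of_lipschitzWith_one hμ hφ hφ0)
  have hνφ := abs_le.mp (abs_integral_le_of_lipschitzWith_one hν hφ hφ0)
  linarith [hμφ.2, hνφ.1]

lemma integral_sub_integral_le_W1 (hμ : μ (closedBall 0 R)ᶜ = 0) (hν : ν (closedBall 0 R)ᶜ = 0)
    {φ : EuclideanSpace ℝ (Fin d) → ℝ} (hφ : LipschitzWith 1 φ) (hφ0 : φ 0 = 0) :
    (∫ x, φ x ∂μ) - ∫ x, φ x ∂ν ≤ W1 μ ν :=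
  le_csSup (bddAbove_W1_set hμ hν) ⟨φ, hφ, hφ0, rfl⟩

lemma W1_nonneg (hμ : μ (closedBall 0 R)ᶜ = 0) (hν : ν (closedBall 0 R)ᶜ = 0) :
    0 ≤ W1 μ ν := by
  simpa using
    integral_sub_integral_le_W1 hμ hν ((LipschitzWith.const (0 : ℝ)).weaken zero_le_one) rfl

lemma integral_sub_integral_le_mul_W1 (hμ : μ (closedBall 0 R)ᶜ = 0)
    (hν : ν (closedBall 0 R)ᶜ = 0) {K : ℝ≥0} {φ : EuclideanSpace ℝ (Fin d) → ℝ}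
    (hφ : LipschitzWith K φ) :
    (∫ x, φ x ∂μ) - ∫ x, φ x ∂ν ≤ K * W1 μ ν := by
  rcases eq_or_ne K 0 with rfl | hK
  · have hconst : ∀ y, φ y = φ 0 := fun y => by simpa [sub_eq_zero] using hφ.norm_sub_le y 0
    simp [hconst]
  have hψ : LipschitzWith 1 fun y => (K : ℝ)⁻¹ * (φ y - φ 0) := by
    have h := (lipschitzWith_smul (K : ℝ)⁻¹).comp (hφ.sub (LipschitzWith.const (φ 0)))
    rwa [add_zero, nnnorm_inv, NNReal.nnnorm_eq, inv_mul_cancel₀ hK] at h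
  have hintegral : ∀ (ρ : Measure (EuclideanSpace ℝ (Fin d))) [IsProbabilityMeasure ρ],
      ρ (closedBall 0 R)ᶜ = 0 →
        ∫ y, (K : ℝ)⁻¹ * (φ y - φ 0) ∂ρ = (K : ℝ)⁻¹ * (∫ y, φ y ∂ρ - φ 0) := by
    intro ρ _ hρ
    rw [integral_const_mul, integral_sub _ (integrable_const _), integral_const, probReal_univ,
      one_smul]
    exact (isCompact_closedBall 0 R).integrable_of_continuousOn hρ hφ.continuous.continuousOn
  have h := integral_sub_integral_le_W1 hμ hν hψ (by simp)
  rwa [hintegral μ hμ, hintegral ν hν, ← mul_sub, sub_sub_sub_cancel_right,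
    inv_mul_le_iff₀ (by positivity)] at h

lemma norm_integral_sub_integral_le_mul_W1 {F : Type*} [NormedAddCommGroup F] [NormedSpace ℝ F]
    [CompleteSpace F] (hμ : μ (closedBall 0 R)ᶜ = 0) (hν : ν (closedBall 0 R)ᶜ = 0) {K : ℝ≥0}
    {f : EuclideanSpace ℝ (Fin d) → F} (hf : LipschitzOnWith K f (closedBall 0 R)) :
    ‖∫ x, f x ∂μ - ∫ x, f x ∂ν‖ ≤ K * W1 μ ν := by
  obtain ⟨g, hg1, hg⟩ := exists_dual_vector'' ℝ (∫ x, f x ∂μ - ∫ x, f x ∂ν)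
  have hg_lip : LipschitzWith 1 g := g.lipschitz.weaken (by exact_mod_cast hg1)
  obtain ⟨φ, hφ, hfφ⟩ := (hg_lip.comp_lipschitzOnWith hf).extend_real
  have hcomm : ∀ (ρ : Measure (EuclideanSpace ℝ (Fin d))) [IsProbabilityMeasure ρ],
      ρ (closedBall 0 R)ᶜ = 0 → g (∫ x, f x ∂ρ) = ∫ x, φ x ∂ρ := by
    intro ρ _ hρ
    rw [← g.integral_comp_comm
      ((isCompact_closedBall 0 R).integrable_of_continuousOn hρ hf.continuousOn)]
    refine integral_congr_ae ?_
    filter_upwards [mem_ae_iff.mpr hρ] with y hy using hfφ hy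
  calc ‖∫ x, f x ∂μ - ∫ x, f x ∂ν‖ = g (∫ x, f x ∂μ) - g (∫ x, f x ∂ν) := by
        rw [← map_sub, hg]; rfl
    _ = (∫ x, φ x ∂μ) - ∫ x, φ x ∂ν := by rw [hcomm μ hμ, hcomm ν hν]
    _ ≤ K * W1 μ ν := by simpa using integral_sub_integral_le_mul_W1 hμ hν hφ

lemma norm_integral_sub_integral_le_mul_add_W1 {F : Type*} [NormedAddCommGroup F]
    [NormedSpace ℝ F] [CompleteSpace F] (hμ : μ (closedBall 0 R)ᶜ = 0)
    (hν : ν (closedBall 0 R)ᶜ = 0) {K : ℝ≥0}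
    {f : EuclideanSpace ℝ (Fin d) → EuclideanSpace ℝ (Fin d) → F}
    (hfx : ∀ y ∈ closedBall 0 R, LipschitzWith K fun x => f x y)
    (hfy : ∀ x, LipschitzOnWith K (f x) (closedBall 0 R)) (x x' : EuclideanSpace ℝ (Fin d)) :
    ‖∫ y, f x y ∂μ - ∫ y, f x' y ∂ν‖ ≤ K * (‖x - x'‖ + W1 μ ν) := by
  have hint : ∀ x, Integrable (f x) μ := fun x =>
    (isCompact_closedBall 0 R).integrable_of_continuousOn hμ (hfy x).continuousOn
  have hpoint : ‖∫ y, f x y ∂μ - ∫ y, f x' y ∂μ‖ ≤ K * ‖x - x'‖ := by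
    rw [← integral_sub (hint x) (hint x')]
    have hbound : ∀ᵐ y ∂μ, ‖f x y - f x' y‖ ≤ K * ‖x - x'‖ := by
      filter_upwards [mem_ae_iff.mpr hμ] with y hy using (hfx y hy).norm_sub_le x x'
    simpa using norm_integral_le_of_norm_le_const hbound
  calc ‖∫ y, f x y ∂μ - ∫ y, f x' y ∂ν‖
      ≤ ‖∫ y, f x y ∂μ - ∫ y, f x' y ∂μ‖ + ‖∫ y, f x' y ∂μ - ∫ y, f x' y ∂ν‖ :=
        norm_sub_le_norm_sub_add_norm_sub _ _ _
    _ ≤ K * (‖x - x'‖ + W1 μ ν) := by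
        rw [mul_add]
        exact add_le_add hpoint (norm_integral_sub_integral_le_mul_W1 hμ hν (hfy x'))

end Wasserstein

lemma LipschitzWith.smul_const {E F : Type*} [PseudoMetricSpace E] [SeminormedAddCommGroup F]
    [NormedSpace ℝ F] {K : ℝ≥0} {g : E → ℝ} (hg : LipschitzWith K g) (v : F) :
    LipschitzWith (K * ‖v‖₊) fun x => g x • v := by
  refine LipschitzWith.of_dist_le_mul fun a b => ?_
  rw [dist_eq_norm, ← sub_smul, norm_smul, ← dist_eq_norm, NNReal.coe_mul, coe_nnnorm,
    mul_right_comm]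
  exact mul_le_mul_of_nonneg_right (hg.dist_le_mul a b) (norm_nonneg v)

lemma lipschitzOnWith_smul_self {E : Type*} [SeminormedAddCommGroup E] [NormedSpace ℝ E]
    {K C R : ℝ≥0} {g : E → ℝ} (hg : LipschitzOnWith K g (closedBall (0 : E) R))
    (hgC : ∀ y ∈ closedBall (0 : E) R, |g y| ≤ C) :
    LipschitzOnWith (C + R * K) (fun y => g y • y) (closedBall (0 : E) R) := by
  refine LipschitzOnWith.of_dist_le_mul fun a ha b hb => ?_
  have hsplit : g a • a - g b • b = g a • (a - b) + (g a - g b) • b := by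
    rw [smul_sub, sub_smul]; abel
  rw [dist_eq_norm, dist_eq_norm, hsplit]
  calc ‖g a • (a - b) + (g a - g b) • b‖ ≤ |g a| * ‖a - b‖ + |g a - g b| * ‖b‖ := by
        simpa only [norm_smul, Real.norm_eq_abs] using
          norm_add_le (g a • (a - b)) ((g a - g b) • b)
    _ ≤ C * ‖a - b‖ + K * ‖a - b‖ * R := by
        gcongr
        · exact hgC a ha
        · exact hg.norm_sub_le ha hb
        · exact mem_closedBall_zero_iff.mp hb
    _ = ↑(C + R * K) * ‖a - b‖ := by push_cast; ring

lemma norm_inv_smul_sub_inv_smul_le {E : Type*} [SeminormedAddCommGroup E] [NormedSpace ℝ E]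
    {c D D' M : ℝ} {A A' : E} (hc : 0 < c) (hD : c ≤ D) (hD' : c ≤ D') (hA' : ‖A'‖ ≤ M) :
    ‖D⁻¹ • A - D'⁻¹ • A'‖ ≤ c⁻¹ * ‖A - A'‖ + M / c ^ 2 * |D - D'| := by
  have hDpos : 0 < D := hc.trans_le hD
  have hD'pos : 0 < D' := hc.trans_le hD'
  have hsplit : D⁻¹ • A - D'⁻¹ • A' = D⁻¹ • (A - A') + (D⁻¹ - D'⁻¹) • A' := by
    rw [smul_sub, sub_smul]; abel
  have hinv : |D⁻¹ - D'⁻¹| = |D - D'| / (D * D') := by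
    rw [inv_sub_inv hDpos.ne' hD'pos.ne', abs_div, abs_sub_comm,
      abs_of_pos (mul_pos hDpos hD'pos)]
  rw [hsplit]
  refine (norm_add_le _ _).trans (add_le_add ?_ ?_)
  · rw [norm_smul, Real.norm_of_nonneg (inv_nonneg.mpr hDpos.le)]
    gcongr
  · rw [norm_smul, Real.norm_eq_abs, hinv]
    calc |D - D'| / (D * D') * ‖A'‖ ≤ |D - D'| / c ^ 2 * M := by
          gcongr
          nlinarith
      _ = M / c ^ 2 * |D - D'| := by ring

lemma lipschitzWith_exp_neg_mul_sq_div_two (β : ℝ≥0) :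
    LipschitzWith (1 + β) fun t : ℝ => exp (-β * t ^ 2 / 2) := by
  have hderiv : ∀ t : ℝ, HasDerivAt (fun t : ℝ => exp (-β * t ^ 2 / 2))
      (exp (-β * t ^ 2 / 2) * (-β * t)) t := fun t => by
    convert ((hasDerivAt_pow 2 t).const_mul (-(β : ℝ) / 2)).exp using 1 <;> ring_nf
  refine lipschitzWith_of_nnnorm_deriv_le (fun t => (hderiv t).differentiableAt) fun t => ?_
  rw [(hderiv t).deriv, ← NNReal.coe_le_coe, coe_nnnorm, norm_mul, norm_mul, norm_neg,
    Real.norm_of_nonneg (exp_pos _).le, NNReal.coe_add, NNReal.coe_one, Real.norm_eq_abs,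
    NNReal.abs_eq, show -(β : ℝ) * t ^ 2 / 2 = -(β * t ^ 2 / 2) by ring, exp_neg,
    inv_mul_le_iff₀ (exp_pos _)]
  -- `β |t| ≤ (1 + β) (1 + β t² / 2)`, and `1 + β t² / 2 ≤ exp (β t² / 2)`
  have hexp := add_one_le_exp ((β : ℝ) * t ^ 2 / 2)
  have hβ := β.coe_nonneg
  have ht : ‖t‖ ^ 2 = t ^ 2 := by rw [Real.norm_eq_abs, sq_abs]
  nlinarith [mul_nonneg hβ (sq_nonneg (‖t‖ - 1)), mul_nonneg hβ (sq_nonneg t)]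

def Gnormalizer (d : ℕ) (β : ℝ≥0) : ℝ≥0 :=
  ⟨((β : ℝ) / (2 * π)) ^ ((d : ℝ) / 2), by positivity⟩

lemma Gnormalizer_pos {β : ℝ≥0} (hβ : 0 < β) : 0 < Gnormalizer d β := by
  rw [← NNReal.coe_pos]
  exact rpow_pos_of_pos (by positivity) _

section Gaussian

variable (β : ℝ≥0)

lemma Gkernel_eq (z : EuclideanSpace ℝ (Fin d)) :
    Gkernel d β z = Gnormalizer d β * exp (-β * ‖z‖ ^ 2 / 2) := rfl

lemma Gkernel_nonneg (z : EuclideanSpace ℝ (Fin d)) : 0 ≤ Gkernel d β z := by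
  rw [Gkernel_eq]; positivity

lemma Gkernel_le (z : EuclideanSpace ℝ (Fin d)) : Gkernel d β z ≤ Gnormalizer d β := by
  rw [Gkernel_eq]
  exact mul_le_of_le_one_right (by positivity) (exp_le_one_iff.mpr (by
    have := β.coe_nonneg; have := sq_nonneg ‖z‖; nlinarith))

lemma le_Gkernel {r : ℝ} {z : EuclideanSpace ℝ (Fin d)} (hz : ‖z‖ ≤ r) :
    Gnormalizer d β * exp (-β * r ^ 2 / 2) ≤ Gkernel d β z := by
  rw [Gkernel_eq]
  gcongr _ * exp ?_
  have := mul_le_mul_of_nonneg_left (pow_le_pow_left₀ (norm_nonneg z) hz 2) β.coe_nonneg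
  linarith

lemma lipschitzWith_Gkernel : LipschitzWith (Gnormalizer d β * (1 + β)) (Gkernel d β) := by
  have h := (lipschitzWith_smul (Gnormalizer d β : ℝ)).comp
    ((lipschitzWith_exp_neg_mul_sq_div_two β).comp
      (lipschitzWith_one_norm (E := EuclideanSpace ℝ (Fin d))))
  rwa [mul_one, NNReal.nnnorm_eq] at h

lemma lipschitzWith_Gkernel_sub_right (y : EuclideanSpace ℝ (Fin d)) :
    LipschitzWith (Gnormalizer d β * (1 + β)) fun x => Gkernel d β (x - y) := by
  have h := (lipschitzWith_Gkernel β).comp (LipschitzWith.id.sub (LipschitzWith.const y))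
  rwa [add_zero, mul_one] at h

lemma lipschitzWith_Gkernel_sub_left (x : EuclideanSpace ℝ (Fin d)) :
    LipschitzWith (Gnormalizer d β * (1 + β)) fun y => Gkernel d β (x - y) := by
  have h := (lipschitzWith_Gkernel β).comp ((LipschitzWith.const x).sub LipschitzWith.id)
  rwa [zero_add, mul_one] at h

variable {R : ℝ≥0} {μ ν : Measure (EuclideanSpace ℝ (Fin d))} [IsProbabilityMeasure μ]
  [IsProbabilityMeasure ν]

lemma le_Gconv (hμ : μ (closedBall 0 R)ᶜ = 0) {x : EuclideanSpace ℝ (Fin d)}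
    (hx : x ∈ closedBall 0 (R : ℝ)) :
    Gnormalizer d β * exp (-β * (2 * R) ^ 2 / 2) ≤ Gconv d β μ x := by
  have hint : Integrable (fun y => Gkernel d β (x - y)) μ :=
    (isCompact_closedBall 0 (R : ℝ)).integrable_of_continuousOn hμ
      (lipschitzWith_Gkernel_sub_left β x).continuous.continuousOn
  have hbound : ∀ᵐ y ∂μ, Gnormalizer d β * exp (-β * (2 * R) ^ 2 / 2) ≤ Gkernel d β (x - y) := by
    filter_upwards [mem_ae_iff.mpr hμ] with y hy
    refine le_Gkernel β ((norm_sub_le x y).trans ?_)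
    linarith [mem_closedBall_zero_iff.mp hx, mem_closedBall_zero_iff.mp hy]
  simpa [Gconv] using integral_mono_ae (integrable_const _) hint hbound

lemma norm_integral_Gkernel_smul_le (hμ : μ (closedBall 0 R)ᶜ = 0)
    (x : EuclideanSpace ℝ (Fin d)) :
    ‖∫ y, Gkernel d β (x - y) • y ∂μ‖ ≤ Gnormalizer d β * R := by
  have hbound : ∀ᵐ y ∂μ, ‖Gkernel d β (x - y) • y‖ ≤ Gnormalizer d β * R := by
    filter_upwards [mem_ae_iff.mpr hμ] with y hy
    rw [norm_smul, Real.norm_of_nonneg (Gkernel_nonneg β _)]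
    exact mul_le_mul (Gkernel_le β _) (mem_closedBall_zero_iff.mp hy) (norm_nonneg y)
      (Gnormalizer d β).coe_nonneg
  simpa using norm_integral_le_of_norm_le_const hbound

lemma abs_Gconv_sub_Gconv_le (hμ : μ (closedBall 0 R)ᶜ = 0) (hν : ν (closedBall 0 R)ᶜ = 0)
    (x x' : EuclideanSpace ℝ (Fin d)) :
    |Gconv d β μ x - Gconv d β ν x'| ≤ Gnormalizer d β * (1 + β) * (‖x - x'‖ + W1 μ ν) := by
  simpa only [Gconv, Real.norm_eq_abs, NNReal.coe_mul, NNReal.coe_add, NNReal.coe_one] using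
    norm_integral_sub_integral_le_mul_add_W1 hμ hν
      (fun y _ => lipschitzWith_Gkernel_sub_right β y) (fun x =>
        (lipschitzWith_Gkernel_sub_left β x).lipschitzOnWith) x x'

lemma norm_integral_Gkernel_smul_sub_le (hμ : μ (closedBall 0 R)ᶜ = 0)
    (hν : ν (closedBall 0 R)ᶜ = 0) (x x' : EuclideanSpace ℝ (Fin d)) :
    ‖∫ y, Gkernel d β (x - y) • y ∂μ - ∫ y, Gkernel d β (x' - y) • y ∂ν‖ ≤
      (Gnormalizer d β + R * (Gnormalizer d β * (1 + β))) * (‖x - x'‖ + W1 μ ν) := by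
  have hfx : ∀ y ∈ closedBall 0 (R : ℝ), LipschitzWith
      (Gnormalizer d β + R * (Gnormalizer d β * (1 + β))) fun x => Gkernel d β (x - y) • y := by
    intro y hy
    refine ((lipschitzWith_Gkernel_sub_right β y).smul_const y).weaken ?_
    rw [mul_comm]
    refine le_add_left (mul_le_mul_of_nonneg_right ?_ zero_le)
    exact_mod_cast mem_closedBall_zero_iff.mp hy
  have hfy : ∀ x, LipschitzOnWith (Gnormalizer d β + R * (Gnormalizer d β * (1 + β)))
      (fun y => Gkernel d β (x - y) • y) (closedBall 0 R) := fun x =>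
    lipschitzOnWith_smul_self (lipschitzWith_Gkernel_sub_left β x).lipschitzOnWith
      fun y _ => (abs_of_nonneg (Gkernel_nonneg β _)).trans_le (Gkernel_le β _)
  simpa only [NNReal.coe_mul, NNReal.coe_add, NNReal.coe_one] using
    norm_integral_sub_integral_le_mul_add_W1 hμ hν hfx hfy x x'

end Gaussian

theorem drift_lipschitz_bounded_support (β R : ℝ) (hβ : 0 < β) (hR : 0 < R) :
    ∃ L > 0, ∀ (x x' : EuclideanSpace ℝ (Fin d))
      (μ ν : Measure (EuclideanSpace ℝ (Fin d))),
      IsProbabilityMeasure μ → IsProbabilityMeasure ν →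
      μ (closedBall (0 : EuclideanSpace ℝ (Fin d)) R)ᶜ = 0 →
      ν (closedBall (0 : EuclideanSpace ℝ (Fin d)) R)ᶜ = 0 →
      x ∈ closedBall (0 : EuclideanSpace ℝ (Fin d)) R →
      x' ∈ closedBall (0 : EuclideanSpace ℝ (Fin d)) R →
      ‖Gdrift d β μ x - Gdrift d β ν x'‖ ≤ L * (‖x - x'‖ + W1 μ ν) := by
  lift β to ℝ≥0 using hβ.le
  lift R to ℝ≥0 using hR.le
  set G : ℝ := (Gnormalizer d β : ℝ)
  set c : ℝ := G * exp (-β * (2 * R) ^ 2 / 2)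
  have hc : 0 < c := mul_pos (Gnormalizer_pos (NNReal.coe_pos.mp hβ)) (exp_pos _)
  set L₀ := c⁻¹ * (G + R * (G * (1 + β))) + G * R / c ^ 2 * (G * (1 + β))
  refine ⟨1 + L₀, by positivity, fun x x' μ ν _ _ hμ hν hx hx' => ?_⟩
  have hbary : ‖Gbarycenter d β μ x - Gbarycenter d β ν x'‖ ≤ L₀ * (‖x - x'‖ + W1 μ ν) := by
    refine (norm_inv_smul_sub_inv_smul_le hc (le_Gconv β hμ hx) (le_Gconv β hν hx')
      (norm_integral_Gkernel_smul_le β hν x')).trans ?_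
    rw [add_mul, mul_assoc, mul_assoc]
    gcongr
    · exact_mod_cast norm_integral_Gkernel_smul_sub_le β hμ hν x x'
    · exact_mod_cast abs_Gconv_sub_Gconv_le β hμ hν x x'
  calc ‖Gdrift d β μ x - Gdrift d β ν x'‖
      ≤ ‖Gbarycenter d β μ x - Gbarycenter d β ν x'‖ + ‖x - x'‖ := by
        rw [Gdrift, Gdrift, sub_sub_sub_comm]; exact norm_sub_le _ _
    _ ≤ (1 + L₀) * (‖x - x'‖ + W1 μ ν) := by
        linarith [norm_nonneg (x - x'), W1_nonneg hμ hν]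

end
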